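/- For the Gaussian prior N(m, γ²), γ > 0, the drift (h(t,z) - z)/(1-t) of the conditioned process satisfies (h(t,z) - z)/(1-t) = (m - z(1-γ²))/(1 - t(1-γ²)) = (m/(1-γ²) - z)/(1/(1-γ²) - t) for γ ∈ (0,1); i.e., the process is a Brownian bridge pinning at m/(1-γ²) at time T = 1/(1-γ²). -/

import Mathlib

open Real Set MeasureTheory ProbabilityTheory

/-- The likelihood weight for the pinning point `u`, given `Z_t = z` (with `Z_0 = 0`). -/
noncomputable def w (t z u : ℝ) : ℝ :=
  Real.exp (u * z / (1 - t) - t * u ^ 2 / (2 * (1 - t)))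

/-- The posterior mean `h(t,z)` of the pinning point. -/
noncomputable def h (μ : Measure ℝ) (t z : ℝ) : ℝ :=
  (∫ u, u * w t z u ∂μ) / ∫ u, w t z u ∂μ

lemma integral_gaussianReal_eq_aux (m : ℝ) (v : NNReal) (hv : v ≠ 0) (g : ℝ → ℝ) :
    ∫ u, g u ∂(gaussianReal m v) = ∫ u, gaussianPDFReal m v u * g u := by
  rw [gaussianReal_of_var_ne_zero m hv]
  have hpdf : gaussianPDF m v = fun x => ((gaussianPDFReal m v x).toNNReal : ENNReal) := rfl
  rw [hpdf, integral_withDensity_eq_integral_smul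
    ((measurable_gaussianPDFReal m v).real_toNNReal) g]
  congr 1
  ext u
  rw [NNReal.smul_def, Real.coe_toNNReal _ (gaussianPDFReal_nonneg m v u), smul_eq_mul]

lemma integral_exp_shift_aux {B : ℝ} (hB : 0 < B) (s : ℝ) :
    ∫ x : ℝ, Real.exp (-B * (x - s) ^ 2) = Real.sqrt (π / B) := by
  have := MeasureTheory.integral_sub_right_eq_self
    (μ := (volume : Measure ℝ)) (fun y : ℝ => Real.exp (-B * y ^ 2)) s
  rw [this, integral_gaussian]

lemma integral_odd_aux {B : ℝ} (hB : 0 < B) :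
    ∫ x : ℝ, x * Real.exp (-B * x ^ 2) = 0 := by
  have hneg := MeasureTheory.integral_neg_eq_self
    (μ := (volume : Measure ℝ)) (fun y : ℝ => y * Real.exp (-B * y ^ 2))
  simp only [neg_sq, neg_mul] at hneg
  rw [MeasureTheory.integral_neg] at hneg
  simp only [neg_mul]
  linarith

lemma integral_mul_exp_shift_aux {B : ℝ} (hB : 0 < B) (s : ℝ) :
    ∫ x : ℝ, x * Real.exp (-B * (x - s) ^ 2) = s * Real.sqrt (π / B) := by
  have h1 := MeasureTheory.integral_sub_right_eq_self
    (μ := (volume : Measure ℝ)) (fun y : ℝ => (y + s) * Real.exp (-B * y ^ 2)) s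
  simp only [sub_add_cancel] at h1
  rw [h1]
  have h2 : ∀ y : ℝ, (y + s) * Real.exp (-B * y ^ 2)
      = y * Real.exp (-B * y ^ 2) + s * Real.exp (-B * y ^ 2) := fun y => by ring
  simp_rw [h2]
  rw [MeasureTheory.integral_add (integrable_mul_exp_neg_mul_sq hB)
      ((integrable_exp_neg_mul_sq hB).const_mul s),
    integral_odd_aux hB, MeasureTheory.integral_const_mul, integral_gaussian, zero_add]

theorem stmt14 (m γ : ℝ) (hγ : γ ∈ Set.Ioo (0 : ℝ) 1) (t z : ℝ)
    (ht : t ∈ Set.Ico (0 : ℝ) 1) :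
    (h (gaussianReal m ⟨γ ^ 2, sq_nonneg γ⟩) t z - z) / (1 - t) =
        (m - z * (1 - γ ^ 2)) / (1 - t * (1 - γ ^ 2)) ∧
      (m - z * (1 - γ ^ 2)) / (1 - t * (1 - γ ^ 2)) =
        (m / (1 - γ ^ 2) - z) / (1 / (1 - γ ^ 2) - t) := by
  obtain ⟨hγ0, hγ1⟩ := hγ
  obtain ⟨ht0, ht1⟩ := ht
  have h1t : (0 : ℝ) < 1 - t := by linarith
  have hg2 : (0 : ℝ) < γ ^ 2 := by positivity
  have hD : (0 : ℝ) < 1 - t * (1 - γ ^ 2) := by nlinarith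
  have hγ2lt : (0 : ℝ) < 1 - γ ^ 2 := by nlinarith
  set v : NNReal := ⟨γ ^ 2, sq_nonneg γ⟩ with hvdef
  have hvne : v ≠ 0 := by
    intro hcon
    have : (v : ℝ) = 0 := by rw [hcon]; simp
    rw [hvdef] at this
    change γ ^ 2 = 0 at this
    linarith
  set B : ℝ := (1 - t * (1 - γ ^ 2)) / (2 * γ ^ 2 * (1 - t)) with hBdef
  have hB : 0 < B := div_pos hD (by positivity)
  set s : ℝ := (m * (1 - t) + z * γ ^ 2) / (1 - t * (1 - γ ^ 2)) with hsdef
  set C : ℝ := (Real.sqrt (2 * π * γ ^ 2))⁻¹ * Real.exp (B * s ^ 2 - m ^ 2 / (2 * γ ^ 2))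
    with hCdef
  have hCpos : 0 < C := by
    rw [hCdef]
    have : (0 : ℝ) < Real.sqrt (2 * π * γ ^ 2) := Real.sqrt_pos.mpr (by positivity)
    positivity
  have hpt : ∀ u : ℝ, gaussianPDFReal m v u * w t z u = C * Real.exp (-B * (u - s) ^ 2) := by
    intro u
    rw [gaussianPDFReal, w, hCdef]
    have hvcoe : ((v : NNReal) : ℝ) = γ ^ 2 := rfl
    rw [hvcoe, mul_assoc ((Real.sqrt (2 * π * γ ^ 2))⁻¹),
      mul_assoc ((Real.sqrt (2 * π * γ ^ 2))⁻¹), ← Real.exp_add, ← Real.exp_add]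
    congr 1
    rw [hBdef, hsdef]
    field_simp
    congr 1
    rw [div_eq_div_iff (mul_pos (by positivity) h1t).ne' (mul_pos (mul_pos (by positivity) h1t) hD).ne']
    ring
  have hw : ∫ u, w t z u ∂(gaussianReal m v) = C * Real.sqrt (π / B) := by
    rw [integral_gaussianReal_eq_aux m v hvne]
    simp_rw [hpt]
    rw [MeasureTheory.integral_const_mul, integral_exp_shift_aux hB]
  have huw : ∫ u, u * w t z u ∂(gaussianReal m v) = C * (s * Real.sqrt (π / B)) := by
    rw [integral_gaussianReal_eq_aux m v hvne]
    have : ∀ u : ℝ, gaussianPDFReal m v u * (u * w t z u)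
        = C * (u * Real.exp (-B * (u - s) ^ 2)) := by
      intro u
      rw [mul_left_comm, hpt u]
      ring
    simp_rw [this]
    rw [MeasureTheory.integral_const_mul, integral_mul_exp_shift_aux hB]
  have hsqrtpos : 0 < Real.sqrt (π / B) := Real.sqrt_pos.mpr (by positivity)
  have hh : h (gaussianReal m v) t z = s := by
    rw [h, hw, huw, mul_div_mul_left _ _ (ne_of_gt hCpos),
      mul_div_cancel_right₀ _ (ne_of_gt hsqrtpos)]
  constructor
  · rw [hh, hsdef]
    rw [div_sub' (ne_of_gt hD), div_div, div_eq_div_iff (by positivity) (ne_of_gt hD)]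
    ring
  · rw [div_eq_div_iff (ne_of_gt hD) (by
      have : 1 / (1 - γ ^ 2) - t = (1 - t * (1 - γ ^ 2)) / (1 - γ ^ 2) := by
        field_simp
      rw [this]
      positivity)]
    field_simp
    all_goals ring
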